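/- arXiv:2410.23442 — 3 statements merged into one kernel-verified Lean document; each statement's English description precedes it below -/
import Mathlib

section
/- If f : X' → X is a continuous strict p-morphism between Esakia spaces, then for every x ∈ X', the restriction of f to the principal upset ↑x is a homeomorphism onto ↑f(x), and its inverse is a continuous p-morphism. -/
theorem priestley_isClosed_Ici {X : Type*} [TopologicalSpace X] [PartialOrder X]
    [PriestleySpace X] (x : X) : IsClosed (Set.Ici x) := by
  rw [← isOpen_compl_iff]
  rw [isOpen_iff_mem_nhds]
  intro y hy
  obtain ⟨U, hU, hUup, hxU, hyU⟩ := exists_isClopen_upper_of_not_le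
    (show ¬ x ≤ y from hy)
  exact Filter.mem_of_superset (hU.compl.2.mem_nhds hyU)
    (fun z hz hxz => hz (hUup hxz hxU))

theorem stmt_11 {X' X : Type*}
    [TopologicalSpace X'] [PartialOrder X'] [CompactSpace X'] [PriestleySpace X']
    [TopologicalSpace X] [PartialOrder X] [CompactSpace X] [PriestleySpace X]
    (hEs' : ∀ C : Set X', IsClopen C → IsClopen (↑(lowerClosure C) : Set X'))
    (hEs : ∀ C : Set X, IsClopen C → IsClopen (↑(lowerClosure C) : Set X))
    (f : X' → X) (hc : Continuous f) (hm : Monotone f)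
    (hstrict : ∀ (x : X') (y : X), f x ≤ y → ∃! x', x ≤ x' ∧ f x' = y) :
    ∀ x : X', ∃ h : Set.Ici x ≃ₜ Set.Ici (f x),
      (∀ u : Set.Ici x, (h u : X) = f u) ∧
      Monotone ⇑h.symm ∧
      ∀ (a : Set.Ici (f x)) (b : Set.Ici x), h.symm a ≤ b →
        ∃ a', a ≤ a' ∧ h.symm a' = b := by
  intro x
  -- the restricted map
  set F : Set.Ici x → Set.Ici (f x) := fun u => ⟨f u, hm u.2⟩ with hF
  have hFinj : Function.Injective F := by
    rintro ⟨u, hu⟩ ⟨v, hv⟩ huv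
    have h1 : f u = f v := congrArg Subtype.val huv
    obtain ⟨w, _, hwu⟩ := hstrict x (f v) (h1 ▸ hm hu)
    exact Subtype.ext ((hwu u ⟨hu, h1⟩).trans (hwu v ⟨hv, rfl⟩).symm)
  have hFsurj : Function.Surjective F := by
    rintro ⟨y, hy⟩
    obtain ⟨w, ⟨hw1, hw2⟩, _⟩ := hstrict x y hy
    exact ⟨⟨w, hw1⟩, Subtype.ext hw2⟩
  have hFcont : Continuous F := Continuous.subtype_mk (hc.comp continuous_subtype_val) _
  haveI : CompactSpace (Set.Ici x) :=
    isCompact_iff_compactSpace.mp (priestley_isClosed_Ici x).isCompact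
  let e : Set.Ici x ≃ Set.Ici (f x) := Equiv.ofBijective F ⟨hFinj, hFsurj⟩
  let h : Set.Ici x ≃ₜ Set.Ici (f x) := Continuous.homeoOfEquivCompactToT2 (f := e) hFcont
  have hval : ∀ u : Set.Ici x, (h u : X) = f u := fun u => rfl
  have hsymm : ∀ (a : Set.Ici (f x)), f (h.symm a : X') = (a : X) := by
    intro a
    rw [← hval (h.symm a), h.apply_symm_apply]
  have key : ∀ (a : Set.Ici (f x)) (b : Set.Ici x), (a : X) ≤ f b → h.symm a ≤ b := by
    intro a b hab
    set g := h.symm a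
    obtain ⟨w, ⟨hw1, hw2⟩, hwu⟩ := hstrict (g : X') (f b) (by rw [hsymm]; exact hab)
    have hxw : x ≤ w := le_trans g.2 hw1
    -- b and w both satisfy x ≤ · and f · = f b
    obtain ⟨z, _, hzu⟩ := hstrict x (f b) (hm b.2)
    have : w = (b : X') := (hzu w ⟨hxw, hw2⟩).trans (hzu b ⟨b.2, rfl⟩).symm
    exact Subtype.coe_le_coe.mp (this ▸ hw1)
  refine ⟨h, hval, ?_, ?_⟩
  · intro a b hab
    exact key a _ (by rw [hsymm]; exact hab)
  · intro a b hab
    refine ⟨h b, ?_, h.symm_apply_apply b⟩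
    have := hm (Subtype.coe_le_coe.mpr hab)
    rw [hsymm] at this
    exact this
end

section
/- Let c : H → A be a Heyting algebra homomorphism with H complete, let x ∈ A, and let G ⊆ A be a subset whose join is the top element 1 of A. If for every y ∈ G there exists h_y ∈ H with y ∧ x = y ∧ c(h_y), then ⋁_{h ∈ H} (x ⇔ c(h)) = 1 in A. -/
theorem stmt_15 {H A : Type*} [Order.Frame H] [HeytingAlgebra A]
    (c : HeytingHom H A) (x : A) (G : Set A) (hG : IsLUB G ⊤)
    (hloc : ∀ y ∈ G, ∃ h : H, y ⊓ x = y ⊓ c h) :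
    IsLUB (Set.range fun h : H => (x ⇨ c h) ⊓ (c h ⇨ x)) ⊤ := by
  constructor
  · intro a _; exact le_top
  · intro b hb
    refine hG.2 ?_
    intro y hy
    obtain ⟨h, hh⟩ := hloc y hy
    have h1 : y ≤ x ⇨ c h := le_himp_iff.2 (hh.le.trans inf_le_right)
    have h2 : y ≤ c h ⇨ x := le_himp_iff.2 (hh.ge.trans inf_le_right)
    exact (le_inf h1 h2).trans (hb ⟨h, rfl⟩)
end

section
/- Let f : X' → X be a p-morphism between partially ordered sets. Then f is strict (the witness in the back condition is unique) if and only if for every upset U of X', in the complete Heyting algebra of upsets of X' the identity ⋃_{W ∈ Up(X)} (U ⇔ f⁻¹(W)) = X' holds, where ⇔ is the biimplication of the Heyting algebra of upsets. -/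
/-- Heyting implication in the algebra of upsets of a poset:
the largest upset contained in `Uᶜ ∪ V`. -/
def himpU {α : Type*} [Preorder α] (U V : Set α) : Set α :=
  {y | ∀ z, y ≤ z → z ∈ U → z ∈ V}

theorem stmt_16 {X' X : Type*} [PartialOrder X'] [PartialOrder X] (f : X' → X)
    (hm : Monotone f)
    (hp : ∀ (x : X') (y : X), f x ≤ y → ∃ x', x ≤ x' ∧ f x' = y) :
    (∀ (x : X') (y : X), f x ≤ y → ∃! x', x ≤ x' ∧ f x' = y) ↔
    ∀ U : Set X', IsUpperSet U →
      (⋃ W ∈ {W : Set X | IsUpperSet W},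
        himpU U (f ⁻¹' W) ∩ himpU (f ⁻¹' W) U) = Set.univ := by
  constructor
  · intro hs U hU
    ext x
    simp only [Set.mem_iUnion, Set.mem_univ, iff_true, Set.mem_inter_iff,
      Set.mem_setOf_eq]
    refine ⟨{y | ∃ z, x ≤ z ∧ z ∈ U ∧ f z = y}, ?_, ?_, ?_⟩
    · rintro y y' hyy' ⟨z, hxz, hzU, hfz⟩
      obtain ⟨z', hzz', hfz'⟩ := hp z y' (hfz ▸ hyy')
      exact ⟨z', hxz.trans hzz', hU hzz' hzU, hfz'⟩
    · intro z hxz hzU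
      exact ⟨z, hxz, hzU, rfl⟩
    · rintro z hxz ⟨z', hxz', hz'U, hfz'⟩
      obtain ⟨w, -, hwu⟩ := hs x (f z) (hm hxz)
      have h1 : z = w := hwu z ⟨hxz, rfl⟩
      have h2 : z' = w := hwu z' ⟨hxz', hfz'⟩
      rw [h1, ← h2]; exact hz'U
  · intro h x y hxy
    have key : ∀ a b : X', x ≤ a → x ≤ b → f a = f b → b ≤ a := by
      intro a b hxa hxb hfab
      have hx : x ∈ (⋃ W ∈ {W : Set X | IsUpperSet W},
          himpU (Set.Ici b) (f ⁻¹' W) ∩ himpU (f ⁻¹' W) (Set.Ici b)) := by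
        rw [h (Set.Ici b) (isUpperSet_Ici b)]; exact Set.mem_univ x
      simp only [Set.mem_iUnion, Set.mem_inter_iff, Set.mem_setOf_eq, himpU] at hx
      obtain ⟨W, _, h1, h2⟩ := hx
      have hfb : f b ∈ W := h1 b hxb (le_refl b)
      exact h2 a hxa (by rw [Set.mem_preimage, hfab]; exact hfb)
    obtain ⟨x₁, hx₁, hf₁⟩ := hp x y hxy
    refine ⟨x₁, ⟨hx₁, hf₁⟩, ?_⟩
    rintro x₂ ⟨hx₂, hf₂⟩
    exact le_antisymm (key x₁ x₂ hx₁ hx₂ (hf₁.trans hf₂.symm))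
      (key x₂ x₁ hx₂ hx₁ (hf₂.trans hf₁.symm))
end
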